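/- Let f : (1/2, ∞) → ℝ satisfy f(σ) → +∞ and f(σ)/√V(σ) → 0 as σ → (1/2)^+, and let δ > 0. For σ > 1/2 define h(t) = ∑_{n=1}^∞ tanh(t/(n^σ·√V(σ)))·(1/(n^σ·√V(σ))) for t ≥ 0. Then for any λ > 0 there exists δ₁ > 0 such that for all σ with 0 < σ − 1/2 ≤ δ₁, any t₀ > 0 solving δ·f(σ) = h(t₀) satisfies δ·f(σ) ≤ t₀ ≤ δ·(1+λ)·f(σ). -/

import Mathlib

open Filter Topology

/-- `V σ = ∑_{n=1}^∞ n^{-2σ}`. -/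
noncomputable def V (σ : ℝ) : ℝ := ∑' n : ℕ, (n : ℝ) ^ (-(2 * σ))

/-- `h σ t = ∑_{n=1}^∞ tanh(t/(n^σ √V(σ))) · (1/(n^σ √V(σ)))`
(the `n = 0` term vanishes). -/
noncomputable def hfun (σ t : ℝ) : ℝ :=
  ∑' n : ℕ, Real.tanh (t / ((n : ℝ) ^ σ * Real.sqrt (V σ))) *
    (1 / ((n : ℝ) ^ σ * Real.sqrt (V σ)))

/-!
With the weights `w n = n^(-σ) / √V(σ)` one has `∑ (w n)² = 1`, `(w n)² ≤ 1 / V(σ)` and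
`h(t) = ∑ tanh (t w n) w n`. The bounds `x - x³/3 ≤ tanh x ≤ x` for `x ≥ 0` then give
`t (1 - t² / (3 V(σ))) ≤ h(t) ≤ t`. The upper bound yields `δ f(σ) ≤ t₀` at once.
If `t₀` exceeded `u = (1 + λ) δ f(σ)`, monotonicity of `h` would give
`u (1 - u² / (3 V(σ))) ≤ h(u) ≤ h(t₀) = u / (1 + λ)`, which fails as soon as
`u² / V(σ) = ((1 + λ) δ f(σ) / √V(σ))²` is small, i.e. for `σ` close to `1/2`.
-/

namespace Real

theorem hasDerivAt_tanh (x : ℝ) : HasDerivAt tanh (1 - tanh x ^ 2) x := by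
  have h : HasDerivAt (fun y => sinh y / cosh y) _ x :=
    (hasDerivAt_sinh x).div (hasDerivAt_cosh x) (cosh_pos x).ne'
  rw [show tanh = fun y => sinh y / cosh y from funext tanh_eq_sinh_div_cosh]
  refine h.congr_deriv ?_
  field_simp

theorem differentiable_tanh : Differentiable ℝ tanh :=
  fun x => (hasDerivAt_tanh x).differentiableAt

theorem tanh_monotone : Monotone tanh :=
  monotone_of_deriv_nonneg differentiable_tanh fun x => by
    rw [(hasDerivAt_tanh x).deriv, sub_nonneg, sq_le_one_iff_abs_le_one, abs_le]
    exact ⟨(neg_one_lt_tanh x).le, (tanh_lt_one x).le⟩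

theorem tanh_nonneg {x : ℝ} (hx : 0 ≤ x) : 0 ≤ tanh x := by
  simpa using tanh_monotone hx

theorem tanh_le_self {x : ℝ} (hx : 0 ≤ x) : tanh x ≤ x := by
  have hd : ∀ y, HasDerivAt (fun y => y - tanh y) (tanh y ^ 2) y := fun y =>
    ((hasDerivAt_id' y).sub (hasDerivAt_tanh y)).congr_deriv (by ring)
  have hmono : Monotone fun y => y - tanh y :=
    monotone_of_deriv_nonneg (fun y => (hd y).differentiableAt) fun y => by
      rw [(hd y).deriv]
      positivity
  simpa using hmono hx

theorem sub_pow_three_div_three_le_tanh {x : ℝ} (hx : 0 ≤ x) : x - x ^ 3 / 3 ≤ tanh x := by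
  have hd : ∀ y, HasDerivAt (fun y => tanh y - (y - y ^ 3 / 3)) (y ^ 2 - tanh y ^ 2) y :=
    fun y => ((hasDerivAt_tanh y).sub ((hasDerivAt_id' y).sub
      ((hasDerivAt_pow 3 y).div_const 3))).congr_deriv (by ring)
  have hmono : MonotoneOn (fun y => tanh y - (y - y ^ 3 / 3)) (Set.Ici 0) := by
    refine monotoneOn_of_deriv_nonneg (convex_Ici 0) ?_ ?_ fun y hy => ?_
    · exact fun y _ => (hd y).continuousAt.continuousWithinAt
    · exact fun y _ => (hd y).differentiableAt.differentiableWithinAt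
    · rw [interior_Ici] at hy
      rw [(hd y).deriv, sub_nonneg]
      exact pow_le_pow_left₀ (tanh_nonneg hy.le) (tanh_le_self hy.le) 2
  simpa using hmono Set.self_mem_Ici hx hx

end Real

open Real

section WeightedTanhSum

theorem tanh_mul_mul_le_mul_sq {t b : ℝ} (ht : 0 ≤ t) (hb : 0 ≤ b) :
    tanh (t * b) * b ≤ t * b ^ 2 :=
  calc tanh (t * b) * b ≤ t * b * b :=
        mul_le_mul_of_nonneg_right (tanh_le_self (mul_nonneg ht hb)) hb
    _ = t * b ^ 2 := by ring

variable {ι : Type*} {b : ι → ℝ}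

theorem summable_tanh_mul_mul (hb : ∀ i, 0 ≤ b i) (hb2 : Summable fun i => b i ^ 2)
    {t : ℝ} (ht : 0 ≤ t) : Summable fun i => tanh (t * b i) * b i :=
  (hb2.mul_left t).of_nonneg_of_le
    (fun i => mul_nonneg (tanh_nonneg (mul_nonneg ht (hb i))) (hb i))
    fun i => tanh_mul_mul_le_mul_sq ht (hb i)

theorem tsum_tanh_mul_mul_le (hb : ∀ i, 0 ≤ b i) (hb2 : Summable fun i => b i ^ 2)
    {t : ℝ} (ht : 0 ≤ t) : ∑' i, tanh (t * b i) * b i ≤ t * ∑' i, b i ^ 2 := by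
  rw [← tsum_mul_left]
  exact (summable_tanh_mul_mul hb hb2 ht).tsum_le_tsum
    (fun i => tanh_mul_mul_le_mul_sq ht (hb i)) (hb2.mul_left t)

theorem tsum_tanh_mul_mul_mono (hb : ∀ i, 0 ≤ b i) (hb2 : Summable fun i => b i ^ 2)
    {s t : ℝ} (hs : 0 ≤ s) (hst : s ≤ t) :
    ∑' i, tanh (s * b i) * b i ≤ ∑' i, tanh (t * b i) * b i :=
  (summable_tanh_mul_mul hb hb2 hs).tsum_le_tsum
    (fun i => mul_le_mul_of_nonneg_right (tanh_monotone (mul_le_mul_of_nonneg_right hst (hb i)))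
      (hb i))
    (summable_tanh_mul_mul hb hb2 (hs.trans hst))

theorem mul_one_sub_mul_tsum_le_tsum_tanh_mul_mul (hb : ∀ i, 0 ≤ b i)
    (hb2 : Summable fun i => b i ^ 2) {M : ℝ} (hM : ∀ i, b i ^ 2 ≤ M) {t : ℝ} (ht : 0 ≤ t) :
    t * (1 - M * t ^ 2 / 3) * ∑' i, b i ^ 2 ≤ ∑' i, tanh (t * b i) * b i := by
  rw [← tsum_mul_left]
  refine (hb2.mul_left _).tsum_le_tsum (fun i => ?_) (summable_tanh_mul_mul hb hb2 ht)
  calc t * (1 - M * t ^ 2 / 3) * b i ^ 2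
      ≤ t * b i ^ 2 - t ^ 3 / 3 * b i ^ 2 * b i ^ 2 := by
        nlinarith [mul_le_mul_of_nonneg_left (hM i) (by positivity : 0 ≤ t ^ 3 / 3 * b i ^ 2)]
    _ = (t * b i - (t * b i) ^ 3 / 3) * b i := by ring
    _ ≤ tanh (t * b i) * b i :=
        mul_le_mul_of_nonneg_right (sub_pow_three_div_three_le_tanh (mul_nonneg ht (hb i)))
          (hb i)

end WeightedTanhSum

noncomputable def hWeight (σ : ℝ) (n : ℕ) : ℝ := 1 / ((n : ℝ) ^ σ * √(V σ))

section hfun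

variable {σ : ℝ}

theorem hfun_eq_tsum (σ t : ℝ) : hfun σ t = ∑' n, tanh (t * hWeight σ n) * hWeight σ n := by
  simp only [hfun, hWeight, div_eq_mul_one_div t]

theorem V_nonneg (σ : ℝ) : 0 ≤ V σ :=
  tsum_nonneg fun n => rpow_nonneg n.cast_nonneg _

theorem summable_rpow_neg_two_mul (hσ : 1 / 2 < σ) :
    Summable fun n : ℕ => (n : ℝ) ^ (-(2 * σ)) :=
  summable_nat_rpow.2 (by linarith)

theorem one_le_V (hσ : 1 / 2 < σ) : 1 ≤ V σ := by
  simpa [V] using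
    (summable_rpow_neg_two_mul hσ).le_tsum 1 fun n _ => rpow_nonneg n.cast_nonneg _

theorem hWeight_nonneg (σ : ℝ) (n : ℕ) : 0 ≤ hWeight σ n :=
  one_div_nonneg.2 (mul_nonneg (rpow_nonneg n.cast_nonneg σ) (sqrt_nonneg _))

theorem hWeight_sq (hσ : σ ≠ 0) (n : ℕ) : hWeight σ n ^ 2 = (n : ℝ) ^ (-(2 * σ)) / V σ := by
  rcases n.eq_zero_or_pos with rfl | _
  · simp [hWeight, zero_rpow hσ, zero_rpow (neg_ne_zero.2 (mul_ne_zero two_ne_zero hσ))]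
  · rw [hWeight, div_pow, mul_pow, sq_sqrt (V_nonneg σ), ← rpow_mul_natCast n.cast_nonneg,
      rpow_neg n.cast_nonneg, one_pow, inv_eq_one_div, div_div, Nat.cast_ofNat, mul_comm σ]

theorem hasSum_hWeight_sq (hσ : 1 / 2 < σ) : HasSum (fun n => hWeight σ n ^ 2) 1 := by
  have hV : V σ ≠ 0 := (zero_lt_one.trans_le (one_le_V hσ)).ne'
  simp_rw [hWeight_sq (by linarith : σ ≠ 0)]
  rw [← div_self hV]
  exact (summable_rpow_neg_two_mul hσ).hasSum.div_const (V σ)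

theorem hWeight_sq_le (hσ : 1 / 2 < σ) (n : ℕ) : hWeight σ n ^ 2 ≤ (V σ)⁻¹ := by
  rw [hWeight_sq (by linarith), div_eq_mul_inv]
  refine mul_le_of_le_one_left (inv_nonneg.2 (V_nonneg σ)) ?_
  rcases n.eq_zero_or_pos with rfl | hn
  · simp [zero_rpow (by linarith : -(2 * σ) ≠ 0)]
  · exact rpow_le_one_of_one_le_of_nonpos (by exact_mod_cast hn) (by linarith)

theorem hfun_le_self (hσ : 1 / 2 < σ) {t : ℝ} (ht : 0 ≤ t) : hfun σ t ≤ t := by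
  simpa [hfun_eq_tsum, (hasSum_hWeight_sq hσ).tsum_eq] using
    tsum_tanh_mul_mul_le (hWeight_nonneg σ) (hasSum_hWeight_sq hσ).summable ht

theorem hfun_mono (hσ : 1 / 2 < σ) {s t : ℝ} (hs : 0 ≤ s) (hst : s ≤ t) :
    hfun σ s ≤ hfun σ t := by
  simpa only [hfun_eq_tsum] using
    tsum_tanh_mul_mul_mono (hWeight_nonneg σ) (hasSum_hWeight_sq hσ).summable hs hst

theorem mul_one_sub_le_hfun (hσ : 1 / 2 < σ) {t : ℝ} (ht : 0 ≤ t) :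
    t * (1 - t ^ 2 / (3 * V σ)) ≤ hfun σ t := by
  have h := mul_one_sub_mul_tsum_le_tsum_tanh_mul_mul (hWeight_nonneg σ)
    (hasSum_hWeight_sq hσ).summable (hWeight_sq_le hσ) ht
  rw [(hasSum_hWeight_sq hσ).tsum_eq, mul_one, ← hfun_eq_tsum] at h
  convert h using 3
  ring

theorem le_one_add_mul_of_eq_hfun (hσ : 1 / 2 < σ) {a lam t₀ : ℝ} (ha : 0 < a)
    (hlam : 0 < lam) (hsmall : ((1 + lam) * a) ^ 2 / V σ < 3 * (lam / (1 + lam)))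
    (heq : a = hfun σ t₀) : t₀ ≤ (1 + lam) * a := by
  by_contra! hlt
  set u := (1 + lam) * a
  have hu : 0 < u := by positivity
  have hq : u ^ 2 / (3 * V σ) < lam / (1 + lam) := by
    rw [mul_comm, ← div_div]
    linarith
  have := calc
    a = u * (1 - lam / (1 + lam)) := by field_simp; ring
    _ < u * (1 - u ^ 2 / (3 * V σ)) := mul_lt_mul_of_pos_left (by linarith) hu
    _ ≤ hfun σ u := mul_one_sub_le_hfun hσ hu.le
    _ ≤ hfun σ t₀ := hfun_mono hσ hu.le hlt.le
  exact this.ne heq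

end hfun

/-- If `f(σ) → ∞` and `f(σ)/√V(σ) → 0` as `σ → (1/2)⁺` and `δ > 0`, then for any `λ > 0`
there is `δ₁ > 0` such that for `0 < σ - 1/2 ≤ δ₁`, any `t₀ > 0` solving
`δ f(σ) = h(t₀)` satisfies `δ f(σ) ≤ t₀ ≤ δ (1+λ) f(σ)`. -/
theorem t0_bounds
    (f : ℝ → ℝ)
    (hf_top : Tendsto f (𝓝[>] (1/2 : ℝ)) atTop)
    (hf_small : Tendsto (fun σ => f σ / Real.sqrt (V σ)) (𝓝[>] (1/2 : ℝ)) (𝓝 0))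
    (δ : ℝ) (hδ : 0 < δ) :
    ∀ lam > (0 : ℝ), ∃ δ₁ > (0 : ℝ),
      ∀ σ : ℝ, 1/2 < σ → σ - 1/2 ≤ δ₁ →
        ∀ t₀ : ℝ, 0 < t₀ → δ * f σ = hfun σ t₀ →
          δ * f σ ≤ t₀ ∧ t₀ ≤ δ * (1 + lam) * f σ := by
  intro lam hlam
  have hratio :
      Tendsto (fun σ => ((1 + lam) * (δ * f σ)) ^ 2 / V σ) (𝓝[>] (1 / 2)) (𝓝 0) := by
    convert (hf_small.const_mul ((1 + lam) * δ)).pow 2 using 1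
    · ext σ
      rw [← mul_assoc, mul_div_assoc', div_pow, sq_sqrt (V_nonneg σ)]
    · simp
  have hev : ∀ᶠ σ in 𝓝[>] (1 / 2), 0 < f σ ∧
      ((1 + lam) * (δ * f σ)) ^ 2 / V σ < 3 * (lam / (1 + lam)) :=
    (hf_top.eventually_gt_atTop 0).and (hratio.eventually (gt_mem_nhds (by positivity)))
  obtain ⟨σ₁, hσ₁, hσ₁_sub⟩ := mem_nhdsGT_iff_exists_Ioc_subset.1 hev
  refine ⟨σ₁ - 1 / 2, sub_pos.2 hσ₁, fun σ hσ hσσ₁ t₀ ht₀ heq => ?_⟩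
  obtain ⟨hf, hsmall⟩ := hσ₁_sub ⟨hσ, by linarith⟩
  refine ⟨heq ▸ hfun_le_self hσ ht₀.le, ?_⟩
  calc t₀ ≤ (1 + lam) * (δ * f σ) :=
        le_one_add_mul_of_eq_hfun hσ (by positivity) hlam hsmall heq
    _ = δ * (1 + lam) * f σ := by ring
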